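/- arXiv:math/0304306 — 10 statements merged into one kernel-verified Lean document; each statement's English description precedes it below -/
import Mathlib

section
/- The group with presentation ⟨x, y | x y x = y x y, x^2 = y^3⟩ is trivial. -/
/-
In any group, a braid relation a b a = b a b makes c = a b conjugate a to b, hence a³ to
b³ = a². But a² = b³ commutes with both a and b, so with c, and the conjugation gives a³ = a²,
i.e. a = 1; the braid relation then reads b = b², so b = 1. Since a presented group is generated
by its generators, it is trivial.
-/

theorem conj_mul_self_eq_of_braid {G : Type*} [Group G] {a b : G}
    (hab : a * b * a = b * a * b) : a * b * a * (a * b)⁻¹ = b := by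
  rw [mul_inv_rev, ← mul_assoc, hab]
  group

theorem eq_one_of_braid_of_sq_eq_pow_three {G : Type*} [Group G] {a b : G}
    (hab : a * b * a = b * a * b) (h2 : a ^ 2 = b ^ 3) : a = 1 ∧ b = 1 := by
  have hconj : a * b * a ^ 3 * (a * b)⁻¹ = a ^ 2 := by
    rw [← conj_pow, conj_mul_self_eq_of_braid hab, h2]
  have hcomm : Commute (a ^ 2) (a * b) :=
    (Commute.pow_self a 2).mul_right (h2 ▸ Commute.pow_self b 3)
  have hcube : a ^ 3 = a ^ 2 := by
    rw [mul_inv_eq_iff_eq_mul, hcomm.eq] at hconj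
    exact mul_left_cancel hconj
  have ha : a = 1 := by
    rwa [pow_succ, mul_eq_left] at hcube
  refine ⟨ha, ?_⟩
  simpa [ha] using hab.symm

theorem PresentedGroup.eq_one_of_forall_of_eq_one {α : Type*} {rels : Set (FreeGroup α)}
    (h : ∀ j, (PresentedGroup.of j : PresentedGroup rels) = 1) (g : PresentedGroup rels) :
    g = 1 :=
  Subgroup.mem_bot.mp (PresentedGroup.generated_by rels ⊥ (fun j ↦ Subgroup.mem_bot.mpr (h j)) g)

theorem stmt_0
    (x y : FreeGroup (Fin 2)) (hx : x = FreeGroup.of 0) (hy : y = FreeGroup.of 1) :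
    ∀ g : PresentedGroup ({x * y * x * (y * x * y)⁻¹, x ^ 2 * (y ^ 3)⁻¹} :
      Set (FreeGroup (Fin 2))), g = 1 := by
  subst hx hy
  set rels : Set (FreeGroup (Fin 2)) := {_, _}
  have hbraid := PresentedGroup.one_of_mem (rels := rels) (Or.inl rfl)
  have hpow := PresentedGroup.one_of_mem (rels := rels) (Or.inr rfl)
  simp only [map_mul, map_inv, map_pow, mul_inv_eq_one] at hbraid hpow
  obtain ⟨h0, h1⟩ := eq_one_of_braid_of_sq_eq_pow_three hbraid hpow
  refine PresentedGroup.eq_one_of_forall_of_eq_one fun j ↦ ?_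
  fin_cases j
  exacts [h0, h1]
end

section
/- The group with presentation ⟨a, b | b⁻¹ab = a², a⁻¹ba = b²⟩ is trivial. -/
lemma aux_triv {G : Type*} [Group G] (A B : G)
    (e1 : B⁻¹ * A * B * A⁻¹ ^ 2 = 1) (e2 : A⁻¹ * B * A * B⁻¹ ^ 2 = 1) :
    A = 1 ∧ B = 1 := by
  have r1 : A * B = B * A ^ 2 := by
    calc A * B = B * (B⁻¹ * A * B * A⁻¹ ^ 2) * A ^ 2 := by group
    _ = B * 1 * A ^ 2 := by rw [e1]
    _ = B * A ^ 2 := by group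
  have r2 : B * A = A * B ^ 2 := by
    calc B * A = A * (A⁻¹ * B * A * B⁻¹ ^ 2) * B ^ 2 := by group
    _ = A * 1 * B ^ 2 := by rw [e2]
    _ = A * B ^ 2 := by group
  have key : A * B * 1 = (A * B) * (B * A) := by
    calc A * B * 1 = B * A ^ 2 := by rw [mul_one]; exact r1
    _ = (B * A) * A := by rw [pow_two, mul_assoc]
    _ = (A * B ^ 2) * A := by rw [r2]
    _ = (A * B) * (B * A) := by rw [pow_two, ← mul_assoc]; group
  have hBA : (1 : G) = B * A := mul_left_cancel key
  have hBinv : B = A⁻¹ := eq_inv_of_mul_eq_one_left hBA.symm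
  have hA : A = 1 := by
    have h := r1
    rw [hBinv] at h
    calc A = (A⁻¹ * A ^ 2 : G) := by group
    _ = A * A⁻¹ := h.symm
    _ = 1 := by group
  refine ⟨hA, by rw [hBinv, hA]; group⟩

theorem stmt_2
    (a b : FreeGroup (Fin 2)) (ha : a = FreeGroup.of 0) (hb : b = FreeGroup.of 1) :
    ∀ g : PresentedGroup ({b⁻¹ * a * b * a⁻¹ ^ 2, a⁻¹ * b * a * b⁻¹ ^ 2} :
      Set (FreeGroup (Fin 2))), g = 1 := by
  intro g
  obtain ⟨x, rfl⟩ := PresentedGroup.mk_surjective _ g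
  set π := PresentedGroup.mk ({b⁻¹ * a * b * a⁻¹ ^ 2, a⁻¹ * b * a * b⁻¹ ^ 2} :
      Set (FreeGroup (Fin 2))) with hπdef
  have h1 : π (b⁻¹ * a * b * a⁻¹ ^ 2) = 1 :=
    (QuotientGroup.eq_one_iff _).mpr (Subgroup.subset_normalClosure (Set.mem_insert _ _))
  have h2 : π (a⁻¹ * b * a * b⁻¹ ^ 2) = 1 :=
    (QuotientGroup.eq_one_iff _).mpr
      (Subgroup.subset_normalClosure (Set.mem_insert_iff.mpr (Or.inr rfl)))
  have e1 : (π b)⁻¹ * π a * π b * (π a)⁻¹ ^ 2 = 1 := by simpa using h1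
  have e2 : (π a)⁻¹ * π b * π a * (π b)⁻¹ ^ 2 = 1 := by simpa using h2
  obtain ⟨hA, hB⟩ := aux_triv (π a) (π b) e1 e2
  have hπ : π = 1 := by
    apply FreeGroup.ext_hom
    intro i
    fin_cases i
    · show π (FreeGroup.of 0) = 1
      rw [← ha]; exact hA
    · show π (FreeGroup.of 1) = 1
      rw [← hb]; exact hB
  show π x = 1
  rw [hπ]; rfl
end

section
/- For every n ≥ 1, the group with presentation ⟨x, y | x⁻¹yⁿx = yⁿ⁺¹, x = w⟩, where w is any word in x and y with exponent sum 0 in x, is trivial. -/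
/-!
Write `a`, `b` for the images of `x`, `y`. As `w` has exponent sum zero in `x`, it lies in the
normal closure of `y`, so `a` lies in the normal closure of `b`. Both generators commensurate
`⟨b⟩`, hence so does every element, and therefore the elements centralizing some nonzero power of
`b` form a normal subgroup. It contains `b`, hence `a`: so `a` commutes with some `b ^ p`, `p ≠ 0`,
and conjugating `b ^ (n * p)` by `a` gives `b ^ (n * p) = b ^ ((n + 1) * p)`, i.e. `b ^ p = 1`.
Conjugate elements have equal orders, so `orderOf b` is prime to both `n` and `n + 1`; then
`b ^ n` and `b ^ (n + 1)` both generate `⟨b⟩`, so `a` normalizes `⟨b⟩`. Thus `⟨b⟩` is normal,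
`a ∈ ⟨b⟩` commutes with `b`, and the relation collapses to `b ^ n = b ^ (n + 1)`.
-/

open Subgroup

section

variable {G : Type*} [Group G]

def zpowersCommensurator (b : G) : Subgroup G where
  carrier := {g | ∃ p q : ℤ, p ≠ 0 ∧ q ≠ 0 ∧ MulAut.conj g (b ^ p) = b ^ q}
  one_mem' := ⟨1, 1, one_ne_zero, one_ne_zero, by simp⟩
  mul_mem' := by
    rintro g h ⟨p₁, q₁, hp₁, hq₁, hg⟩ ⟨p₂, q₂, hp₂, hq₂, hh⟩
    refine ⟨p₂ * p₁, q₁ * q₂, mul_ne_zero hp₂ hp₁, mul_ne_zero hq₁ hq₂, ?_⟩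
    rw [map_mul, MulAut.mul_apply, zpow_mul, map_zpow, hh, ← zpow_mul, mul_comm, zpow_mul,
      map_zpow, hg, ← zpow_mul]
  inv_mem' := by
    rintro g ⟨p, q, hp, hq, hg⟩
    exact ⟨q, p, hq, hp, by rw [← hg, map_inv, MulAut.inv_apply_self]⟩

def zpowersVirtualCentralizer (b : G) : Subgroup G where
  carrier := {g | ∃ p : ℤ, p ≠ 0 ∧ Commute g (b ^ p)}
  one_mem' := ⟨1, one_ne_zero, Commute.one_left _⟩
  mul_mem' := by
    rintro g h ⟨p₁, hp₁, hg⟩ ⟨p₂, hp₂, hh⟩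
    refine ⟨p₁ * p₂, mul_ne_zero hp₁ hp₂, ?_⟩
    rw [zpow_mul]
    refine (hg.zpow_right p₂).mul_left ?_
    rw [← zpow_mul, mul_comm, zpow_mul]
    exact hh.zpow_right p₁
  inv_mem' := by
    rintro g ⟨p, hp, hg⟩
    exact ⟨p, hp, hg.inv_left⟩

theorem zpowersVirtualCentralizer_normal {b : G} (h : zpowersCommensurator b = ⊤) :
    (zpowersVirtualCentralizer b).Normal where
  conj_mem g := by
    rintro ⟨p, hp, hg⟩ t
    obtain ⟨p', q', hp', hq', ht⟩ : t ∈ zpowersCommensurator b := h ▸ mem_top t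
    refine ⟨q' * p, mul_ne_zero hq' hp, ?_⟩
    have hcomm : Commute g (b ^ (p' * p)) := by
      rw [mul_comm, zpow_mul]
      exact hg.zpow_right p'
    have := hcomm.map (MulAut.conj t)
    rwa [zpow_mul, map_zpow, ht, ← zpow_mul, MulAut.conj_apply] at this

variable {a b : G} {n : ℕ}

theorem zpow_eq_one_of_commute (hrel : a⁻¹ * b ^ n * a = b ^ (n + 1)) {p : ℤ}
    (h : Commute a (b ^ p)) : b ^ p = 1 := by
  have hswap (k : ℕ) : (b ^ k) ^ p = (b ^ p) ^ k := by
    rw [← zpow_natCast, ← zpow_mul, mul_comm, zpow_mul, zpow_natCast]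
  have hconj : a⁻¹ * (b ^ n) ^ p * a = (b ^ (n + 1)) ^ p := by
    rw [← hrel]
    simpa using (conj_zpow (a := a⁻¹) (b := b ^ n) (i := p)).symm
  rw [hswap, hswap, mul_assoc, ← (h.pow_right n).eq, inv_mul_cancel_left, pow_succ] at hconj
  exact left_eq_mul.mp hconj

theorem zpowersCommensurator_eq_top (hn : n ≠ 0) (hgen : closure {a, b} = ⊤)
    (hrel : a⁻¹ * b ^ n * a = b ^ (n + 1)) : zpowersCommensurator b = ⊤ := by
  have ha : a⁻¹ ∈ zpowersCommensurator b :=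
    ⟨n, n + 1, by exact_mod_cast hn, by omega, by simpa [← zpow_natCast] using hrel⟩
  have hb : b ∈ zpowersCommensurator b := ⟨1, 1, one_ne_zero, one_ne_zero, by simp⟩
  rw [eq_top_iff, ← hgen, closure_le, Set.insert_subset_iff, Set.singleton_subset_iff]
  exact ⟨inv_mem_iff.mp ha, hb⟩

theorem isOfFinOrder_of_conj_pow_eq_pow_succ (hn : n ≠ 0) (hgen : closure {a, b} = ⊤)
    (hrel : a⁻¹ * b ^ n * a = b ^ (n + 1)) (ha : a ∈ normalClosure {b}) : IsOfFinOrder b := by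
  have := zpowersVirtualCentralizer_normal (zpowersCommensurator_eq_top hn hgen hrel)
  have hb : b ∈ zpowersVirtualCentralizer b := ⟨1, one_ne_zero, by simp⟩
  obtain ⟨p, hp, hap⟩ := normalClosure_le_normal (Set.singleton_subset_iff.mpr hb) ha
  exact isOfFinOrder_iff_zpow_eq_one.mpr ⟨p, hp, zpow_eq_one_of_commute hrel hap⟩

theorem coprime_orderOf_of_conj_pow_eq_pow_succ (hn : n ≠ 0) (hb : IsOfFinOrder b)
    (hrel : a⁻¹ * b ^ n * a = b ^ (n + 1)) :
    n.Coprime (orderOf b) ∧ (n + 1).Coprime (orderOf b) := by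
  have hord : orderOf (b ^ n) = orderOf (b ^ (n + 1)) := by
    rw [← hrel, ← (MulAut.conj a⁻¹).orderOf_eq, MulAut.conj_apply, inv_inv]
  rw [orderOf_pow' b hn, orderOf_pow' b n.add_one_ne_zero, Nat.div_eq_iff_eq_of_dvd_dvd
    hb.orderOf_pos.ne' (Nat.gcd_dvd_left _ _) (Nat.gcd_dvd_left _ _)] at hord
  have hdvd : (orderOf b).gcd n ∣ 1 :=
    (Nat.dvd_add_right (Nat.gcd_dvd_right _ _)).mp (hord ▸ Nat.gcd_dvd_right _ _)
  have hcop : (orderOf b).Coprime n := Nat.dvd_one.mp hdvd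
  exact ⟨hcop.symm, Nat.Coprime.symm (by rwa [Nat.Coprime, ← hord])⟩

theorem zpowers_pow_eq_zpowers {g : G} {k : ℕ} (hk : k.Coprime (orderOf g)) :
    zpowers (g ^ k) = zpowers g :=
  le_antisymm (zpowers_le.mpr (npow_mem_zpowers g k)) (zpowers_le.mpr (mem_zpowers_pow_iff.mpr hk))

theorem zpowers_normal_of_conj_pow_eq_pow_succ (hgen : closure {a, b} = ⊤)
    (hrel : a⁻¹ * b ^ n * a = b ^ (n + 1))
    (hcop : n.Coprime (orderOf b) ∧ (n + 1).Coprime (orderOf b)) : (zpowers b).Normal := by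
  have ha : a ∈ normalizer (zpowers b : Set G) := by
    rw [mem_normalizer_iff_map_conj_eq]
    calc (zpowers b).map (MulAut.conj a) = (zpowers (b ^ (n + 1))).map (MulAut.conj a) := by
          rw [zpowers_pow_eq_zpowers hcop.2]
      _ = zpowers (b ^ n) := by
          rw [MonoidHom.map_zpowers, ← hrel]
          simp [MulAut.conj_apply, mul_assoc]
      _ = zpowers b := zpowers_pow_eq_zpowers hcop.1
  have hb : b ∈ normalizer (zpowers b : Set G) := le_normalizer (mem_zpowers b)
  rw [← normalizer_eq_top_iff, eq_top_iff, ← hgen, closure_le, Set.insert_subset_iff,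
    Set.singleton_subset_iff]
  exact ⟨ha, hb⟩

theorem eq_one_of_conj_pow_eq_pow_succ (hn : n ≠ 0) (hgen : closure {a, b} = ⊤)
    (hrel : a⁻¹ * b ^ n * a = b ^ (n + 1)) (ha : a ∈ normalClosure {b}) : b = 1 := by
  have hb := isOfFinOrder_of_conj_pow_eq_pow_succ hn hgen hrel ha
  have := zpowers_normal_of_conj_pow_eq_pow_succ hgen hrel
    (coprime_orderOf_of_conj_pow_eq_pow_succ hn hb hrel)
  obtain ⟨k, rfl⟩ := normalClosure_le_normal (Set.singleton_subset_iff.mpr (mem_zpowers b)) ha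
  simpa using zpow_eq_one_of_commute hrel (Commute.zpow_zpow_self b k 1)

theorem subsingleton_of_conj_pow_eq_pow_succ (hn : n ≠ 0) (hgen : closure {a, b} = ⊤)
    (hrel : a⁻¹ * b ^ n * a = b ^ (n + 1)) (ha : a ∈ normalClosure {b}) : Subsingleton G := by
  have hb := eq_one_of_conj_pow_eq_pow_succ hn hgen hrel ha
  have ha1 : a = 1 := by rwa [hb, normalClosure_eq_bot_iff.mpr subset_rfl, mem_bot] at ha
  rw [ha1, hb, Set.pair_eq_singleton, closure_singleton_one] at hgen
  exact subsingleton_iff.mp (subsingleton_of_bot_eq_top hgen)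

end

theorem FreeGroup.mem_normalClosure_of_lift_eq_one {α : Type*} [DecidableEq α] (i : α)
    {w : FreeGroup α}
    (hw : lift (fun j => if j = i then Multiplicative.ofAdd (1 : ℤ) else 1) w = 1) :
    w ∈ normalClosure (of '' {j | j ≠ i}) := by
  let π := QuotientGroup.mk' (normalClosure (of '' {j | j ≠ i}))
  have hcomp : (zpowersHom _ (π (of i))).comp (lift fun j => if j = i then
      Multiplicative.ofAdd (1 : ℤ) else 1) = π := by
    ext j
    by_cases hj : j = i
    · simp [hj]
    · have hπj : π (of j) = 1 :=
        (QuotientGroup.eq_one_iff _).mpr (subset_normalClosure (Set.mem_image_of_mem of hj))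
      simp [hj, hπj]
  rw [← QuotientGroup.eq_one_iff]
  change π w = 1
  rw [← hcomp, MonoidHom.comp_apply, hw, _root_.map_one]

theorem stmt_3
    (x y : FreeGroup (Fin 2)) (hx : x = FreeGroup.of 0) (hy : y = FreeGroup.of 1)
    (n : ℕ) (hn : 1 ≤ n) (w : FreeGroup (Fin 2))
    (hw : FreeGroup.lift
      (fun i : Fin 2 => if i = 0 then Multiplicative.ofAdd (1 : ℤ) else 1) w = 1) :
    ∀ g : PresentedGroup ({x⁻¹ * y ^ n * x * (y ^ (n + 1))⁻¹, x * w⁻¹} :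
      Set (FreeGroup (Fin 2))), g = 1 := by
  set R : Set (FreeGroup (Fin 2)) := {x⁻¹ * y ^ n * x * (y ^ (n + 1))⁻¹, x * w⁻¹}
  have hrel : PresentedGroup.mk R (x⁻¹ * y ^ n * x) = PresentedGroup.mk R (y ^ (n + 1)) :=
    PresentedGroup.mk_eq_mk_of_mul_inv_mem (Set.mem_insert _ _)
  have hxw : PresentedGroup.mk R x = PresentedGroup.mk R w :=
    PresentedGroup.mk_eq_mk_of_mul_inv_mem (Set.mem_insert_of_mem _ rfl)
  have hwy : w ∈ normalClosure {y} := by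
    have hne : {j : Fin 2 | j ≠ 0} = {1} := by ext j; fin_cases j <;> simp
    simpa [hne, hy] using FreeGroup.mem_normalClosure_of_lift_eq_one 0 hw
  have hxy : PresentedGroup.mk R x ∈ normalClosure {PresentedGroup.mk R y} := by
    simpa [hxw] using map_normalClosure_le {y} (PresentedGroup.mk R) (mem_map_of_mem _ hwy)
  have hgen : closure {PresentedGroup.mk R x, PresentedGroup.mk R y} = ⊤ := by
    rw [← PresentedGroup.closure_range_of]
    congr 1
    ext
    simp [hx, hy, PresentedGroup.of, Fin.exists_fin_two, eq_comm]
  have := subsingleton_of_conj_pow_eq_pow_succ (Nat.one_le_iff_ne_zero.mp hn) hgen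
    (by simpa using hrel) hxy
  exact fun g => Subsingleton.elim g 1
end

section
/- For every n ≥ 2, the group with presentation ⟨x, y | xⁿ = yⁿ⁺¹, xyx = yxy⟩ is trivial. -/
theorem stmt_4
    (x y : FreeGroup (Fin 2)) (hx : x = FreeGroup.of 0) (hy : y = FreeGroup.of 1)
    (n : ℕ) (hn : 2 ≤ n) :
    ∀ g : PresentedGroup ({x ^ n * (y ^ (n + 1))⁻¹, x * y * x * (y * x * y)⁻¹} :
      Set (FreeGroup (Fin 2))), g = 1 := by
  set rels : Set (FreeGroup (Fin 2)) :=
    {x ^ n * (y ^ (n + 1))⁻¹, x * y * x * (y * x * y)⁻¹} with hrels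
  let π : FreeGroup (Fin 2) →* PresentedGroup rels :=
    QuotientGroup.mk' (Subgroup.normalClosure rels)
  set X := π x with hX
  set Y := π y with hY
  have hone : ∀ r ∈ rels, π r = 1 := fun r hr =>
    (QuotientGroup.eq_one_iff r).mpr (Subgroup.subset_normalClosure hr)
  have h1 : X ^ n = Y ^ (n + 1) := by
    have h := hone _ (Set.mem_insert _ _)
    rw [map_mul, map_inv, map_pow, map_pow, mul_inv_eq_one] at h
    exact h
  have h2 : X * Y * X = Y * X * Y := by
    have h := hone _ (Set.mem_insert_of_mem _ rfl)
    simp only [map_mul, map_inv, mul_inv_eq_one] at h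
    exact h
  have hc : (X * Y) * X = Y * (X * Y) := by
    rw [← mul_assoc]; exact h2
  have hck : ∀ k : ℕ, (X * Y) * X ^ k = Y ^ k * (X * Y) := by
    intro k
    induction k with
    | zero => simp
    | succ k ih =>
      rw [pow_succ, pow_succ, ← mul_assoc, ih, mul_assoc, hc, ← mul_assoc,
        ← mul_assoc]
  have hXYn : X ^ n = Y ^ n := by
    have h := hck n
    rw [h1] at h
    -- h : (X * Y) * Y ^ (n+1) = Y ^ n * (X * Y)
    have h' : X * Y ^ (n + 2) = Y ^ n * X * Y := by
      calc X * Y ^ (n + 2) = X * (Y * Y ^ (n + 1)) := by rw [← pow_succ']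
        _ = (X * Y) * Y ^ (n + 1) := by rw [mul_assoc]
        _ = Y ^ n * (X * Y) := h
        _ = Y ^ n * X * Y := by rw [mul_assoc]
    have h'' : X * Y ^ (n + 1) = Y ^ n * X := by
      have := mul_right_cancel (b := Y)
        (a := X * Y ^ (n + 1)) (c := Y ^ n * X) ?_
      · exact this
      · calc X * Y ^ (n + 1) * Y = X * (Y ^ (n + 1) * Y) := by rw [mul_assoc]
          _ = X * Y ^ (n + 2) := by rw [← pow_succ]
          _ = Y ^ n * X * Y := h'
    have : X ^ n * X = Y ^ n * X := by
      rw [← pow_succ, ← h'', ← h1, ← pow_succ']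
    exact mul_right_cancel this
  have hY1 : Y = 1 := by
    have : Y ^ n * Y = Y ^ n * 1 := by
      rw [mul_one, ← pow_succ, ← h1, hXYn]
    exact mul_left_cancel this
  have hX1 : X = 1 := by
    have := h2
    rw [hY1, mul_one, one_mul, mul_one] at this
    -- this : X * X = X
    have : X * X = X * 1 := by rw [mul_one]; exact this
    exact mul_left_cancel this
  have hgen : ∀ i : Fin 2, π (FreeGroup.of i) = 1 := by
    intro i
    fin_cases i
    · show π (FreeGroup.of 0) = 1
      rw [← hx]; exact hX1
    · show π (FreeGroup.of 1) = 1
      rw [← hy]; exact hY1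
  have hπ : π = 1 := FreeGroup.ext_hom _ _ (by simpa using hgen)
  intro g
  obtain ⟨w, rfl⟩ := QuotientGroup.mk'_surjective (Subgroup.normalClosure rels) g
  show π w = 1
  rw [hπ]; rfl
end

section
/- For integers k, l, m, n with kn − lm = ±1, the group ⟨x, y | xᵏyˡ, xᵐyⁿ⟩ is trivial. -/
theorem stmt_7
    (x y : FreeGroup (Fin 2)) (hx : x = FreeGroup.of 0) (hy : y = FreeGroup.of 1)
    (k l m n : ℤ) (h : k * n - l * m = 1 ∨ k * n - l * m = -1) :
    ∀ g : PresentedGroup ({x ^ k * y ^ l, x ^ m * y ^ n} :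
      Set (FreeGroup (Fin 2))), g = 1 := by
  set rels : Set (FreeGroup (Fin 2)) := {x ^ k * y ^ l, x ^ m * y ^ n} with hrels
  set f := PresentedGroup.mk rels with hf
  set a := f x with ha
  set b := f y with hb
  have rel1 : a ^ k * b ^ l = 1 := by
    have : f (x ^ k * y ^ l) = 1 := by
      exact (QuotientGroup.eq_one_iff _).mpr
        (Subgroup.subset_normalClosure (by left; rfl))
    simpa [map_mul, map_zpow] using this
  have rel2 : a ^ m * b ^ n = 1 := by
    have : f (x ^ m * y ^ n) = 1 := by
      exact (QuotientGroup.eq_one_iff _).mpr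
        (Subgroup.subset_normalClosure (by right; rfl))
    simpa [map_mul, map_zpow] using this
  have e1 : a ^ k = b ^ (-l) := by
    rw [zpow_neg]
    exact eq_inv_of_mul_eq_one_left rel1
  have e2 : a ^ m = b ^ (-n) := by
    rw [zpow_neg]
    exact eq_inv_of_mul_eq_one_left rel2
  have ha1 : a = 1 := by
    have h1 : a ^ (k * n) = b ^ (-(l * n)) := by
      rw [zpow_mul, e1, ← zpow_mul]; ring_nf
    have h2 : a ^ (m * l) = b ^ (-(l * n)) := by
      rw [zpow_mul, e2, ← zpow_mul]; ring_nf
    have h3 : a ^ (k * n - l * m) = 1 := by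
      have : a ^ (k * n) = a ^ (m * l) := h1.trans h2.symm
      have := mul_inv_eq_one.mpr this
      rw [← zpow_neg, ← zpow_add] at this
      convert this using 2; ring
    rcases h with h | h <;> rw [h] at h3 <;> simpa using h3
  have hb1 : b = 1 := by
    have hbl : b ^ l = 1 := by simpa [ha1] using rel1
    have hbn : b ^ n = 1 := by simpa [ha1] using rel2
    have hkn : b ^ (k * n) = 1 := by rw [mul_comm, zpow_mul, hbn, one_zpow]
    have hlm : b ^ (l * m) = 1 := by rw [zpow_mul, hbl, one_zpow]
    have h3 : b ^ (k * n - l * m) = 1 := by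
      rw [sub_eq_add_neg, zpow_add, hkn, zpow_neg, hlm]; simp
    rcases h with h | h <;> rw [h] at h3 <;> simpa using h3
  intro g
  have := PresentedGroup.generated_by rels ⊥ (fun j => by
    fin_cases j
    · show f (FreeGroup.of 0) ∈ (⊥ : Subgroup _)
      rw [← hx, ← ha, ha1]; exact Subgroup.one_mem _
    · show f (FreeGroup.of 1) ∈ (⊥ : Subgroup _)
      rw [← hy, ← hb, hb1]; exact Subgroup.one_mem _) g
  simpa using this
end

section
/- If ⟨a, b | r, s⟩ is a presentation of the trivial group, then ⟨a, b | s⁻¹ r s r⁻², r⁻¹ s r s⁻²⟩ is also a presentation of the trivial group. -/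
theorem stmt_9
    (r s : FreeGroup (Fin 2))
    (h : ∀ g : PresentedGroup ({r, s} : Set (FreeGroup (Fin 2))), g = 1) :
    ∀ g : PresentedGroup ({s⁻¹ * r * s * (r ^ 2)⁻¹, r⁻¹ * s * r * (s ^ 2)⁻¹} :
      Set (FreeGroup (Fin 2))), g = 1 := by
  set T : Set (FreeGroup (Fin 2)) :=
    {s⁻¹ * r * s * (r ^ 2)⁻¹, r⁻¹ * s * r * (s ^ 2)⁻¹} with hT
  intro g
  have e1 : (QuotientGroup.mk (s⁻¹ * r * s * (r ^ 2)⁻¹) : PresentedGroup T) = 1 := by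
    rw [QuotientGroup.eq_one_iff]
    exact Subgroup.subset_normalClosure (Set.mem_insert _ _)
  have e2 : (QuotientGroup.mk (r⁻¹ * s * r * (s ^ 2)⁻¹) : PresentedGroup T) = 1 := by
    rw [QuotientGroup.eq_one_iff]
    exact Subgroup.subset_normalClosure (Set.mem_insert_of_mem _ rfl)
  set R : PresentedGroup T := QuotientGroup.mk r with hRdef
  set S : PresentedGroup T := QuotientGroup.mk s with hSdef
  have e1' : S⁻¹ * R * S * (R ^ 2)⁻¹ = 1 := by
    rw [hRdef, hSdef]; exact e1
  have e2' : R⁻¹ * S * R * (S ^ 2)⁻¹ = 1 := by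
    rw [hRdef, hSdef]; exact e2
  have h2 : S⁻¹ * R * S = R ^ 2 := mul_inv_eq_one.mp e1'
  have h3 : R⁻¹ * S * R = S ^ 2 := mul_inv_eq_one.mp e2'
  have hc : R⁻¹ * (S⁻¹ * R * S) = R := by rw [h2]; group
  have hd : S⁻¹ * (R⁻¹ * S * R) = S := by rw [h3]; group
  have hSR : S = R⁻¹ := by
    calc S = S⁻¹ * (R⁻¹ * S * R) := hd.symm
      _ = (R⁻¹ * (S⁻¹ * R * S))⁻¹ := by group
      _ = R⁻¹ := by rw [hc]
  have hr1 : R = 1 := by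
    calc R = R⁻¹ * (S⁻¹ * R * S) := hc.symm
      _ = R⁻¹ * ((R⁻¹)⁻¹ * R * R⁻¹) := by rw [hSR]
      _ = 1 := by group
  have hs1 : S = 1 := by rw [hSR, hr1, inv_one]
  have hrmem : r ∈ Subgroup.normalClosure T := by
    rw [← QuotientGroup.eq_one_iff]; exact hr1
  have hsmem : s ∈ Subgroup.normalClosure T := by
    rw [← QuotientGroup.eq_one_iff]; exact hs1
  have hsub : Subgroup.normalClosure ({r, s} : Set (FreeGroup (Fin 2)))
      ≤ Subgroup.normalClosure T := by
    apply Subgroup.normalClosure_le_normal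
    intro x hx
    rcases hx with rfl | hx
    · exact hrmem
    · rw [Set.mem_singleton_iff] at hx; subst hx; exact hsmem
  obtain ⟨w, hw⟩ := QuotientGroup.mk_surjective g
  rw [← hw]; refine (QuotientGroup.eq_one_iff w).mpr ?_
  apply hsub
  rw [← QuotientGroup.eq_one_iff]
  exact h (QuotientGroup.mk w)
end

section
/- If a tuple U ∈ Fₙⁿ can be transformed into (x₁,...,xₙ) by a finite sequence of moves, each of which is either an AC-move or the componentwise application of an automorphism of Fₙ that fixes the tuple class of generators up to AC-moves (e.g. a Whitehead automorphism), then U is AC-equivalent to (x₁,...,xₙ). -/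
/-- Elementary Andrews–Curtis moves on `n`-tuples of elements of the free group `Fₙ`. -/
def ACMove {n : ℕ} (U V : Fin n → FreeGroup (Fin n)) : Prop :=
  (∃ i, V = Function.update U i (U i)⁻¹) ∨
  (∃ i j, j ≠ i ∧ V = Function.update U i (U i * U j)) ∨
  (∃ i w, V = Function.update U i (w * U i * w⁻¹)) ∨
  (∃ σ : Equiv.Perm (Fin n), V = U ∘ σ)

/-- AC-equivalence: a finite sequence of elementary AC-moves. -/
def ACEquiv {n : ℕ} (U V : Fin n → FreeGroup (Fin n)) : Prop :=
  Relation.ReflTransGen ACMove U V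

/-- An extended move: either an elementary AC-move, or the componentwise application of
an automorphism `φ` of `Fₙ` such that the tuple of generators, with `φ⁻¹` applied
componentwise, is reachable from the tuple of generators by AC-moves
(e.g. a Whitehead automorphism). -/
def ExtMove {n : ℕ} (U V : Fin n → FreeGroup (Fin n)) : Prop :=
  ACMove U V ∨
    ∃ φ : FreeGroup (Fin n) ≃* FreeGroup (Fin n),
      ACEquiv (fun i => FreeGroup.of i) (fun i => φ.symm (FreeGroup.of i)) ∧
      V = fun k => φ (U k)

lemma acMove_map {n : ℕ} (φ : FreeGroup (Fin n) ≃* FreeGroup (Fin n))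
    {U V : Fin n → FreeGroup (Fin n)} (h : ACMove U V) :
    ACMove (fun k => φ (U k)) (fun k => φ (V k)) := by
  rcases h with ⟨i, rfl⟩ | ⟨i, j, hij, rfl⟩ | ⟨i, w, rfl⟩ | ⟨σ, rfl⟩
  · exact Or.inl ⟨i, by funext k; by_cases hk : k = i <;> simp [hk, Function.update]⟩
  · exact Or.inr <| Or.inl ⟨i, j, hij, by
      funext k; by_cases hk : k = i <;> simp [hk, Function.update]⟩
  · exact Or.inr <| Or.inr <| Or.inl ⟨i, φ w, by
      funext k; by_cases hk : k = i <;> simp [hk, Function.update]⟩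
  · exact Or.inr <| Or.inr <| Or.inr ⟨σ, rfl⟩

lemma acEquiv_map {n : ℕ} (φ : FreeGroup (Fin n) ≃* FreeGroup (Fin n))
    {U V : Fin n → FreeGroup (Fin n)} (h : ACEquiv U V) :
    ACEquiv (fun k => φ (U k)) (fun k => φ (V k)) :=
 by
  induction h with
  | refl => exact Relation.ReflTransGen.refl
  | tail _ hm ih => exact ih.tail (acMove_map φ hm)

lemma acMove_rev {n : ℕ} {U V : Fin n → FreeGroup (Fin n)} (h : ACMove U V) :
    ACEquiv V U := by
  rcases h with ⟨i, rfl⟩ | ⟨i, j, hij, rfl⟩ | ⟨i, w, rfl⟩ | ⟨σ, rfl⟩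
  · refine Relation.ReflTransGen.single (Or.inl ⟨i, ?_⟩)
    funext k; by_cases hk : k = i <;> simp [hk, Function.update]
  · -- invert j, multiply i by j, invert j
    set V := Function.update U i (U i * U j) with hV
    have h1 : ACMove V (Function.update V j (V j)⁻¹) := Or.inl ⟨j, rfl⟩
    set V1 := Function.update V j (V j)⁻¹ with hV1
    have h2 : ACMove V1 (Function.update V1 i (V1 i * V1 j)) :=
      Or.inr <| Or.inl ⟨i, j, hij, rfl⟩
    set V2 := Function.update V1 i (V1 i * V1 j) with hV2
    have h3 : ACMove V2 (Function.update V2 j (V2 j)⁻¹) := Or.inl ⟨j, rfl⟩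
    have heq : Function.update V2 j (V2 j)⁻¹ = U := by
      funext k
      by_cases hk : k = j
      · subst hk; simp [hV2, hV1, hV, Function.update, hij]
      · by_cases hk2 : k = i
        · subst hk2; simp [hV2, hV1, hV, Function.update, hk, hij]
        · simp [hV2, hV1, hV, Function.update, hk, hk2]
    exact ((Relation.ReflTransGen.single h1).tail h2).tail (heq ▸ h3)
  · refine Relation.ReflTransGen.single (Or.inr <| Or.inr <| Or.inl ⟨i, w⁻¹, ?_⟩)
    funext k; by_cases hk : k = i <;> simp [hk, Function.update, mul_assoc]
  · refine Relation.ReflTransGen.single (Or.inr <| Or.inr <| Or.inr ⟨σ⁻¹, ?_⟩)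
    funext k; simp

lemma acEquiv_symm {n : ℕ} {U V : Fin n → FreeGroup (Fin n)} (h : ACEquiv U V) :
    ACEquiv V U := by
  induction h with
  | refl => exact Relation.ReflTransGen.refl
  | tail _ hm ih => exact Relation.ReflTransGen.trans (acMove_rev hm) ih

theorem stmt_15 {n : ℕ} (U : Fin n → FreeGroup (Fin n))
    (h : Relation.ReflTransGen ExtMove U (fun i => FreeGroup.of i)) :
    ACEquiv U (fun i => FreeGroup.of i) := by
  induction h using Relation.ReflTransGen.head_induction_on with
  | refl => exact Relation.ReflTransGen.refl
  | head hab _ ih =>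
    rcases hab with hm | ⟨φ, hgen, rfl⟩
    · exact Relation.ReflTransGen.head hm ih
    · have h1 := acEquiv_map φ.symm ih
      simp only [MulEquiv.symm_apply_apply] at h1
      exact h1.trans (acEquiv_symm hgen)
end

section
/- Let G = ⟨a,b | r(a,b), s(a,b)⟩ and H = ⟨a,b | u(a,b), v(a,b)⟩ be presentations of the trivial group, and suppose the pair (r, s) is AC-equivalent to (a, b) in the free group F₂. Then the pair (r(u,v), s(u,v)) is AC-equivalent to (u, v). -/
/-- Elementary Andrews–Curtis moves on pairs of elements of the free group on two
generators: inverting a component, multiplying a component on the right by the other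
component, and conjugating a component by an arbitrary element. -/
def ACPMove (p q : FreeGroup (Fin 2) × FreeGroup (Fin 2)) : Prop :=
  q = (p.1⁻¹, p.2) ∨ q = (p.1, p.2⁻¹) ∨
  q = (p.1 * p.2, p.2) ∨ q = (p.1, p.2 * p.1) ∨
  (∃ w, q = (w * p.1 * w⁻¹, p.2)) ∨ (∃ w, q = (p.1, w * p.2 * w⁻¹))

/-- AC-equivalence of pairs: a finite sequence of elementary AC-moves. -/
def ACPEquiv (p q : FreeGroup (Fin 2) × FreeGroup (Fin 2)) : Prop :=
  Relation.ReflTransGen ACPMove p q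

/-- Substitution: the image of `r` under the endomorphism of the free group on two
generators sending the first generator to `u` and the second to `v`. -/
def subst (u v r : FreeGroup (Fin 2)) : FreeGroup (Fin 2) :=
  FreeGroup.lift (fun i : Fin 2 => if i = 0 then u else v) r

lemma acpmove_map (φ : FreeGroup (Fin 2) →* FreeGroup (Fin 2))
    {p q : FreeGroup (Fin 2) × FreeGroup (Fin 2)} (h : ACPMove p q) :
    ACPMove (φ p.1, φ p.2) (φ q.1, φ q.2) := by
  rcases h with h | h | h | h | ⟨w, h⟩ | ⟨w, h⟩ <;> subst h
  · exact Or.inl (by simp)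
  · exact Or.inr (Or.inl (by simp))
  · exact Or.inr (Or.inr (Or.inl (by simp)))
  · exact Or.inr (Or.inr (Or.inr (Or.inl (by simp))))
  · exact Or.inr (Or.inr (Or.inr (Or.inr (Or.inl ⟨φ w, by simp⟩))))
  · exact Or.inr (Or.inr (Or.inr (Or.inr (Or.inr ⟨φ w, by simp⟩))))

lemma acpequiv_map (φ : FreeGroup (Fin 2) →* FreeGroup (Fin 2))
    {p q : FreeGroup (Fin 2) × FreeGroup (Fin 2)} (h : ACPEquiv p q) :
    ACPEquiv (φ p.1, φ p.2) (φ q.1, φ q.2) := by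
  induction h with
  | refl => exact Relation.ReflTransGen.refl
  | tail _ hm ih => exact ih.tail (acpmove_map φ hm)

theorem stmt_16
    (a b : FreeGroup (Fin 2)) (ha : a = FreeGroup.of 0) (hb : b = FreeGroup.of 1)
    (r s u v : FreeGroup (Fin 2))
    (hG : ∀ g : PresentedGroup ({r, s} : Set (FreeGroup (Fin 2))), g = 1)
    (hH : ∀ g : PresentedGroup ({u, v} : Set (FreeGroup (Fin 2))), g = 1)
    (hrs : ACPEquiv (r, s) (a, b)) :
    ACPEquiv (subst u v r, subst u v s) (u, v) := by
  have h := acpequiv_map (FreeGroup.lift (fun i : Fin 2 => if i = 0 then u else v)) hrs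
  simpa [subst, ha, hb] using h
end

section
/- If the pair (r, s) is AC-equivalent to (a, b) in F₂ and the pair (u, v) is AC-equivalent to (a, b) in F₂, then the pair (r(u,v), s(u,v)) is AC-equivalent to (a, b) in F₂. -/
theorem ACPMove.map (φ : FreeGroup (Fin 2) →* FreeGroup (Fin 2))
    {p q : FreeGroup (Fin 2) × FreeGroup (Fin 2)} (h : ACPMove p q) :
    ACPMove (Prod.map φ φ p) (Prod.map φ φ q) := by
  rcases h with rfl | rfl | rfl | rfl | ⟨w, rfl⟩ | ⟨w, rfl⟩
  · exact Or.inl (by simp)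
  · exact Or.inr <| Or.inl (by simp)
  · exact Or.inr <| Or.inr <| Or.inl (by simp)
  · exact Or.inr <| Or.inr <| Or.inr <| Or.inl (by simp)
  · exact Or.inr <| Or.inr <| Or.inr <| Or.inr <| Or.inl ⟨φ w, by simp⟩
  · exact Or.inr <| Or.inr <| Or.inr <| Or.inr <| Or.inr ⟨φ w, by simp⟩

theorem ACPEquiv.map (φ : FreeGroup (Fin 2) →* FreeGroup (Fin 2))
    {p q : FreeGroup (Fin 2) × FreeGroup (Fin 2)} (h : ACPEquiv p q) :
    ACPEquiv (Prod.map φ φ p) (Prod.map φ φ q) :=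
  Relation.ReflTransGen.lift (Prod.map φ φ) (fun _ _ => ACPMove.map φ) p q h

theorem subst_of_zero (u v : FreeGroup (Fin 2)) : subst u v (FreeGroup.of 0) = u := by
  simp [subst]

theorem subst_of_one (u v : FreeGroup (Fin 2)) : subst u v (FreeGroup.of 1) = v := by
  simp [subst]

theorem stmt_17
    (a b : FreeGroup (Fin 2)) (ha : a = FreeGroup.of 0) (hb : b = FreeGroup.of 1)
    (r s u v : FreeGroup (Fin 2))
    (hrs : ACPEquiv (r, s) (a, b)) (huv : ACPEquiv (u, v) (a, b)) :
    ACPEquiv (subst u v r, subst u v s) (a, b) := by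
  subst ha hb
  have hsubst : ACPEquiv (subst u v r, subst u v s)
      (subst u v (FreeGroup.of 0), subst u v (FreeGroup.of 1)) :=
    hrs.map (FreeGroup.lift fun i : Fin 2 => if i = 0 then u else v)
  rw [subst_of_zero, subst_of_one] at hsubst
  exact hsubst.trans huv
end

section
/- In the free group on a, b, the pair (b⁻¹aba⁻², a⁻¹bab⁻²) is AC-equivalent to the pair (b, a). -/
theorem stmt_18
    (a b : FreeGroup (Fin 2)) (ha : a = FreeGroup.of 0) (hb : b = FreeGroup.of 1) :
    ACPEquiv (b⁻¹ * a * b * a⁻¹ ^ 2, a⁻¹ * b * a * b⁻¹ ^ 2) (b, a) := by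
  have step : ∀ p q r : FreeGroup (Fin 2) × FreeGroup (Fin 2),
      ACPMove p q → ACPEquiv q r → ACPEquiv p r := fun _ _ _ => Relation.ReflTransGen.head
  -- conj2 by a
  apply step _ (b⁻¹ * a * b * a⁻¹ * a⁻¹, b * a * b⁻¹ * b⁻¹ * a⁻¹)
  · exact Or.inr <| Or.inr <| Or.inr <| Or.inr <| Or.inr ⟨a, by
      simp only [Prod.mk.injEq]; constructor <;> group⟩
  -- conj2 by b⁻¹
  apply step _ (b⁻¹ * a * b * a⁻¹ * a⁻¹, a * b⁻¹ * b⁻¹ * a⁻¹ * b)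
  · exact Or.inr <| Or.inr <| Or.inr <| Or.inr <| Or.inr ⟨b⁻¹, by
      simp only [Prod.mk.injEq]; constructor <;> group⟩
  -- mul2
  apply step _ (b⁻¹ * a * b * a⁻¹ * a⁻¹, a * b⁻¹ * a⁻¹ * a⁻¹)
  · exact Or.inr <| Or.inr <| Or.inr <| Or.inl <| by
      simp only [Prod.mk.injEq]; constructor <;> group
  -- conj2 by a⁻¹
  apply step _ (b⁻¹ * a * b * a⁻¹ * a⁻¹, b⁻¹ * a⁻¹)
  · exact Or.inr <| Or.inr <| Or.inr <| Or.inr <| Or.inr ⟨a⁻¹, by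
      simp only [Prod.mk.injEq]; constructor <;> group⟩
  -- inv1
  apply step _ (a ^ 2 * b⁻¹ * a⁻¹ * b, b⁻¹ * a⁻¹)
  · exact Or.inl <| by simp only [Prod.mk.injEq]; constructor <;> group
  -- mul1
  apply step _ (a ^ 2 * b⁻¹ * a⁻¹ * a⁻¹, b⁻¹ * a⁻¹)
  · exact Or.inr <| Or.inr <| Or.inl <| by
      simp only [Prod.mk.injEq]; constructor <;> group
  -- conj1 by a⁻¹
  apply step _ (a * b⁻¹ * a⁻¹, b⁻¹ * a⁻¹)
  · exact Or.inr <| Or.inr <| Or.inr <| Or.inr <| Or.inl ⟨a⁻¹, by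
      simp only [Prod.mk.injEq]; constructor <;> group⟩
  -- inv1
  apply step _ (a * b * a⁻¹, b⁻¹ * a⁻¹)
  · exact Or.inl <| by simp only [Prod.mk.injEq]; constructor <;> group
  -- mul2
  apply step _ (a * b * a⁻¹, a⁻¹)
  · exact Or.inr <| Or.inr <| Or.inr <| Or.inl <| by
      simp only [Prod.mk.injEq]; constructor <;> group
  -- conj1 by a⁻¹
  apply step _ (b, a⁻¹)
  · exact Or.inr <| Or.inr <| Or.inr <| Or.inr <| Or.inl ⟨a⁻¹, by
      simp only [Prod.mk.injEq]; constructor <;> group⟩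
  -- inv2
  apply step _ (b, a)
  · exact Or.inr <| Or.inl <| by simp only [Prod.mk.injEq]; constructor <;> group
  exact Relation.ReflTransGen.refl
end
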